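/- Under the same hypotheses (ρ^π constant, Poisson equation holds), for every γ ∈ (0,1) the span of the discounted value function satisfies span(V_γ^π) ≤ 2·span(h^π). -/

import Mathlib

/-! Writing `ρ = c • 1`, the Poisson equation gives `V_γ = c / (1 - γ) + h - w` with
`w = γ P w + (1 - γ) P h`. By the maximum principle for the row-stochastic `P`, the values of `w`
stay between `min h` and `max h`, so each of `h` and `w` contributes at most `span h`. The same
maximum principle, applied to `x = γ P x`, shows that `1 - γ P` is invertible. -/

open Matrix

noncomputable def spanSem {S : Type*} [Fintype S] [Nonempty S] (x : S → ℝ) : ℝ :=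
  (⨆ s, x s) - ⨅ s, x s

/-! Writing `ρ = c • 1`, the Poisson equation gives `V_γ = c / (1 - γ) + h - w` with
`w = γ P w + (1 - γ) P h`. By the maximum principle for the row-stochastic `P`, the values of `w`
stay between `min h` and `max h`, so each of `h` and `w` contributes at most `span h`. The same
maximum principle, applied to `x = γ P x`, shows that `1 - γ P` is invertible. -/

lemma spanSem_le_of_forall_mem_Icc {S : Type*} [Fintype S] [Nonempty S] {x : S → ℝ} {a b : ℝ}
    (hx : ∀ s, x s ∈ Set.Icc a b) : spanSem x ≤ b - a := by
  have hsup : (⨆ s, x s) ≤ b := ciSup_le fun s => (hx s).2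
  have hinf : a ≤ ⨅ s, x s := le_ciInf fun s => (hx s).1
  unfold spanSem
  linarith

lemma mem_Icc_iInf_iSup {S : Type*} [Finite S] (x : S → ℝ) (s : S) :
    x s ∈ Set.Icc (⨅ t, x t) (⨆ t, x t) :=
  ⟨ciInf_le (Set.finite_range x).bddBelow s, le_ciSup (Set.finite_range x).bddAbove s⟩

namespace Matrix

variable {S : Type*} [Fintype S] {P : Matrix S S ℝ}

lemma eq_smul_mulVec_add_of_poisson {γ : ℝ} (hγ1 : γ ≠ 1) {ρ h r V : S → ℝ}
    (hPρ : P *ᵥ ρ = ρ) (hPoisson : ρ + h = r + P *ᵥ h) (hV : V - γ • (P *ᵥ V) = r) :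
    (1 - γ)⁻¹ • ρ + h - V = γ • (P *ᵥ ((1 - γ)⁻¹ • ρ + h - V)) + (1 - γ) • (P *ᵥ h) := by
  rw [mulVec_sub, mulVec_add, mulVec_smul, hPρ]
  funext s
  have h1 := congrFun hV s
  have h2 := congrFun hPoisson s
  have hk : (1 - γ) * (1 - γ)⁻¹ = 1 := mul_inv_cancel₀ (sub_ne_zero.2 hγ1.symm)
  simp only [Pi.add_apply, Pi.sub_apply, Pi.smul_apply, smul_eq_mul] at h1 h2 ⊢
  linear_combination h2 - h1 + ρ s * hk

variable [DecidableEq S]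

lemma nonsing_inv_mulVec_sub_smul_mulVec {γ : ℝ} (hA : IsUnit (1 - γ • P)) (r : S → ℝ) :
    (1 - γ • P)⁻¹ *ᵥ r - γ • (P *ᵥ ((1 - γ • P)⁻¹ *ᵥ r)) = r := by
  have hAV : (1 - γ • P) *ᵥ ((1 - γ • P)⁻¹ *ᵥ r) = r := by
    rw [mulVec_mulVec, mul_nonsing_inv _ ((isUnit_iff_isUnit_det _).1 hA), one_mulVec]
  rwa [sub_mulVec, one_mulVec, smul_mulVec] at hAV

lemma mulVec_apply_mem_Icc_of_mem_rowStochastic (hP : P ∈ rowStochastic ℝ S) {x : S → ℝ}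
    {a b : ℝ} (hx : ∀ t, x t ∈ Set.Icc a b) (s : S) : (P *ᵥ x) s ∈ Set.Icc a b := by
  have hsum : ∀ c : ℝ, ∑ j, P s j * c = c := fun c => by
    rw [← Finset.sum_mul, sum_row_of_mem_rowStochastic hP, one_mul]
  constructor
  · calc a = ∑ j, P s j * a := (hsum a).symm
      _ ≤ (P *ᵥ x) s := Finset.sum_le_sum fun j _ =>
          mul_le_mul_of_nonneg_left (hx j).1 (nonneg_of_mem_rowStochastic hP)
  · calc (P *ᵥ x) s ≤ ∑ j, P s j * b := Finset.sum_le_sum fun j _ =>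
          mul_le_mul_of_nonneg_left (hx j).2 (nonneg_of_mem_rowStochastic hP)
      _ = b := hsum b

lemma mem_Icc_of_eq_smul_mulVec_add (hP : P ∈ rowStochastic ℝ S) {γ a b : ℝ}
    (hγ0 : 0 ≤ γ) (hγ1 : γ < 1) {x y : S → ℝ} (hy : ∀ s, y s ∈ Set.Icc a b)
    (hx : x = γ • (P *ᵥ x) + (1 - γ) • y) (s : S) : x s ∈ Set.Icc a b := by
  have : Nonempty S := ⟨s⟩
  have hxs : ∀ t, x t = γ * (P *ᵥ x) t + (1 - γ) * y t := fun t => congrFun hx t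
  obtain ⟨tmin, hmin⟩ := Finite.exists_min x
  obtain ⟨tmax, hmax⟩ := Finite.exists_max x
  have hxI : ∀ t, x t ∈ Set.Icc (x tmin) (x tmax) := fun t => ⟨hmin t, hmax t⟩
  have hPx := mulVec_apply_mem_Icc_of_mem_rowStochastic hP hxI
  have hlow : a ≤ x tmin := by
    have := mul_le_mul_of_nonneg_left (hPx tmin).1 hγ0
    nlinarith [hxs tmin, (hy tmin).1]
  have hupp : x tmax ≤ b := by
    have := mul_le_mul_of_nonneg_left (hPx tmax).2 hγ0
    nlinarith [hxs tmax, (hy tmax).2]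
  exact ⟨hlow.trans (hmin s), (hmax s).trans hupp⟩

lemma isUnit_one_sub_smul_of_mem_rowStochastic (hP : P ∈ rowStochastic ℝ S) {γ : ℝ}
    (hγ0 : 0 ≤ γ) (hγ1 : γ < 1) : IsUnit (1 - γ • P) := by
  refine mulVec_injective_iff_isUnit.1 fun u v huv => funext fun s => ?_
  have hker : (1 - γ • P) *ᵥ (u - v) = 0 := by rw [mulVec_sub, huv, sub_self]
  have hfix : u - v = γ • (P *ᵥ (u - v)) + (1 - γ) • (0 : S → ℝ) := by
    rw [sub_mulVec, one_mulVec, smul_mulVec, sub_eq_zero] at hker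
    rw [smul_zero, add_zero, ← hker]
  have h0 := mem_Icc_of_eq_smul_mulVec_add hP hγ0 hγ1 (fun _ => ⟨le_rfl, le_rfl⟩) hfix s
  exact sub_eq_zero.1 (le_antisymm h0.2 h0.1)

end Matrix

theorem stmt12_general {S : Type*} [Fintype S] [Nonempty S] [DecidableEq S]
    (P : Matrix S S ℝ) (hP0 : ∀ i j, 0 ≤ P i j) (hP1 : ∀ i, ∑ j, P i j = 1)
    (r : S → ℝ)
    (ρ h : S → ℝ)
    (hconst : ∃ c : ℝ, ρ = fun _ => c)
    (hPρ : P *ᵥ ρ = ρ)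
    (hPoisson : ρ + h = r + P *ᵥ h)
    (γ : ℝ) (hγ0 : 0 < γ) (hγ1 : γ < 1) :
    spanSem (((1 : Matrix S S ℝ) - γ • P)⁻¹ *ᵥ r) ≤ 2 * spanSem h := by
  have hP : P ∈ rowStochastic ℝ S := mem_rowStochastic_iff_sum.2 ⟨hP0, hP1⟩
  set V := ((1 : Matrix S S ℝ) - γ • P)⁻¹ *ᵥ r
  have hV : V - γ • (P *ᵥ V) = r := nonsing_inv_mulVec_sub_smul_mulVec
    (isUnit_one_sub_smul_of_mem_rowStochastic hP hγ0.le hγ1) r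
  have hwI : ∀ s, ((1 - γ)⁻¹ • ρ + h - V) s ∈ Set.Icc (⨅ t, h t) (⨆ t, h t) :=
    mem_Icc_of_eq_smul_mulVec_add hP hγ0.le hγ1
      (mulVec_apply_mem_Icc_of_mem_rowStochastic hP (mem_Icc_iInf_iSup h))
      (eq_smul_mulVec_add_of_poisson hγ1.ne hPρ hPoisson hV)
  obtain ⟨c, rfl⟩ := hconst
  have hVI : ∀ s, V s ∈ Set.Icc ((1 - γ)⁻¹ * c + (⨅ t, h t) - ⨆ t, h t)
      ((1 - γ)⁻¹ * c + (⨆ t, h t) - ⨅ t, h t) := fun s => by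
    have hws := hwI s
    have hhs := mem_Icc_iInf_iSup h s
    simp only [Pi.add_apply, Pi.sub_apply, Pi.smul_apply, smul_eq_mul, Set.mem_Icc] at hws hhs ⊢
    constructor <;> linarith
  calc spanSem V ≤ _ := spanSem_le_of_forall_mem_Icc hVI
    _ = 2 * spanSem h := by unfold spanSem; ring

/-- For a policy with constant gain satisfying the Poisson equation,
span(V_γ^π) ≤ 2·span(h^π) where V_γ^π = (I − γP_π)^{-1} r_π. -/
theorem stmt12 {S : Type*} [Fintype S] [Nonempty S] [DecidableEq S]
    (P : Matrix S S ℝ) (hP0 : ∀ i j, 0 ≤ P i j) (hP1 : ∀ i, ∑ j, P i j = 1)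
    (r : S → ℝ) (hr : ∀ s, r s ∈ Set.Icc (0 : ℝ) 1)
    (ρ h : S → ℝ)
    (hconst : ∃ c : ℝ, ρ = fun _ => c)
    (hPρ : P *ᵥ ρ = ρ)
    (hPoisson : ρ + h = r + P *ᵥ h)
    (γ : ℝ) (hγ0 : 0 < γ) (hγ1 : γ < 1) :
    spanSem (((1 : Matrix S S ℝ) - γ • P)⁻¹ *ᵥ r) ≤ 2 * spanSem h :=
  stmt12_general P hP0 hP1 r ρ h hconst hPρ hPoisson γ hγ0 hγ1
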